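/- arXiv:1811.00230 — 2 statements merged into one kernel-verified Lean document; each statement's English description precedes it below -/
import Mathlib

section
/- Let G be a finite bipartite distance-regular graph of diameter 3 with valency k, and let θ1 be the second-largest eigenvalue of its adjacency matrix. Then h_G ≤ (k − θ1)/k. -/
/-!
In a bipartite distance-regular graph of diameter 3 with valency `k`, counting neighbours by
distance gives `A² = k I + c₂ A₂`, `A A₂ = (k - 1) A + k A₃` and `I + A + A₂ + A₃ = J`,
hence `(A + k)(A² - (k - c₂)) = c₂ k J`. So every adjacency eigenvalue `θ ≠ k` is `-k` or
`±√(k - c₂)`.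

Since `E[S,Sᶜ] = k|S| - E[S,S]`, it suffices to find `S` with `2|S| ≤ |V|` and
`θ|S| ≤ E[S,S]`. If `θ ≤ 1` an edge does, if `θ ≤ 3/2` a geodesic of length 3 does.
Otherwise each colour class has `v = 1 + k(k - 1)/c₂` vertices; take `m = ⌊v/2⌋` vertices `P`
of one class and the `m` vertices of the other class with most neighbours in `P`: they receive
at least `k m²/v` of the `k m` edges leaving `P`, which beats `θ m` because `2θv ≤ k(v - 1)`.
-/

open Finset Matrix

/-- `E[S,T]`: the number of ordered pairs `(x, y)` with `x ∈ S`, `y ∈ T` and `x, y` adjacent. -/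
def eB {V : Type} [Fintype V] [DecidableEq V] (G : SimpleGraph V) [DecidableRel G.Adj]
    (S T : Finset V) : ℕ :=
  ((S ×ˢ T).filter fun p => G.Adj p.1 p.2).card

/-- The Cheeger constant of a `k`-regular graph `G`: the infimum of
`E[S,Sᶜ] / (k·|S|)` over nonempty vertex subsets `S` with `2·|S| ≤ |V|`. -/
noncomputable def cheeger {V : Type} [Fintype V] [DecidableEq V] (G : SimpleGraph V)
    [DecidableRel G.Adj] (k : ℕ) : ℝ :=
  sInf {x : ℝ | ∃ S : Finset V, S.Nonempty ∧ 2 * S.card ≤ Fintype.card V ∧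
    x = (eB G S Sᶜ : ℝ) / (k * S.card)}

/-- `θ` is an eigenvalue of the adjacency matrix of `G`. -/
def IsAdjEigenvalue {V : Type} [Fintype V] [DecidableEq V] (G : SimpleGraph V)
    [DecidableRel G.Adj] (θ : ℝ) : Prop :=
  ∃ f : V → ℝ, f ≠ 0 ∧ G.adjMatrix ℝ *ᵥ f = θ • f

/-- `θ` is the second-largest adjacency eigenvalue of the connected `k`-regular graph `G`,
i.e. the largest eigenvalue distinct from the top eigenvalue `k`
(which has multiplicity one for connected graphs). -/
def IsSecondLargestAdjEigenvalue {V : Type} [Fintype V] [DecidableEq V] (G : SimpleGraph V)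
    [DecidableRel G.Adj] (k : ℕ) (θ : ℝ) : Prop :=
  IsAdjEigenvalue G θ ∧ θ ≠ (k : ℝ) ∧ ∀ μ : ℝ, IsAdjEigenvalue G μ → μ ≠ (k : ℝ) → μ ≤ θ

/-- `G` is distance-regular of diameter `D` with intersection numbers `b i`, `c i`:
for every pair of vertices `x, y` at graph distance `i ≤ D`, the vertex `y` has exactly
`c i` neighbors at distance `i - 1` from `x` and exactly `b i` neighbors at distance
`i + 1` from `x`. -/
def IsDistRegular {V : Type} [Fintype V] (G : SimpleGraph V) (D : ℕ) (b c : ℕ → ℕ) : Prop :=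
  ∀ i ≤ D, ∀ x y : V, G.dist x y = i →
    Nat.card {z : V | G.Adj y z ∧ G.dist x z = i - 1} = c i ∧
    Nat.card {z : V | G.Adj y z ∧ G.dist x z = i + 1} = b i

section EdgeCount

variable {V : Type} [Fintype V] [DecidableEq V] {G : SimpleGraph V} [DecidableRel G.Adj]

lemma eB_eq_sum_sum (S T : Finset V) :
    eB G S T = ∑ s ∈ S, ∑ t ∈ T, if G.Adj s t then 1 else 0 := by
  rw [eB, card_filter, sum_product]

lemma eB_comm (S T : Finset V) : eB G S T = eB G T S := by
  rw [eB_eq_sum_sum, eB_eq_sum_sum, sum_comm]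
  simp only [G.adj_comm]

lemma eB_add_eB_compl (S T : Finset V) : eB G S T + eB G S Tᶜ = eB G S univ := by
  simp only [eB_eq_sum_sum, ← sum_add_distrib, sum_add_sum_compl]

lemma eB_univ {k : ℕ} (hreg : G.IsRegularOfDegree k) (S : Finset V) :
    eB G S univ = k * #S := by
  simp only [eB_eq_sum_sum, sum_boole, ← SimpleGraph.neighborFinset_eq_filter,
    SimpleGraph.card_neighborFinset_eq_degree, hreg _, Nat.cast_id, sum_const, smul_eq_mul,
    mul_comm]

lemma eB_eq_zero {S T : Finset V} (h : ∀ s ∈ S, ∀ t ∈ T, ¬G.Adj s t) : eB G S T = 0 := by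
  rw [eB, card_eq_zero, filter_eq_empty_iff]
  rintro ⟨s, t⟩ hst
  exact h s (mem_product.1 hst).1 t (mem_product.1 hst).2

lemma eB_add_eB_le_eB_union {P L : Finset V} (hPL : Disjoint P L) :
    eB G P L + eB G L P ≤ eB G (P ∪ L) (P ∪ L) := by
  simp only [eB_eq_sum_sum, sum_union hPL, sum_add_distrib]
  omega

lemma eB_insert_self {a : V} {S : Finset V} (ha : a ∉ S) :
    eB G (insert a S) (insert a S) = eB G S S + 2 * #{t ∈ S | G.Adj a t} := by
  have h := eB_comm (G := G) S {a}
  simp only [eB_eq_sum_sum, sum_insert ha, sum_singleton, SimpleGraph.irrefl, if_false, zero_add,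
    sum_add_distrib, card_filter] at h ⊢
  omega

end EdgeCount

section Cheeger

variable {V : Type} [Fintype V] [DecidableEq V] {G : SimpleGraph V} [DecidableRel G.Adj] {k : ℕ}

lemma cheeger_le_of_mul_card_le_eB (hreg : G.IsRegularOfDegree k) {S : Finset V}
    (hS : S.Nonempty) (hSV : 2 * #S ≤ Fintype.card V) {θ : ℝ} (hθ : θ * #S ≤ eB G S S) :
    cheeger G k ≤ ((k : ℝ) - θ) / k := by
  have hbdd : BddBelow {x : ℝ | ∃ S : Finset V, S.Nonempty ∧ 2 * #S ≤ Fintype.card V ∧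
      x = (eB G S Sᶜ : ℝ) / (k * #S)} := ⟨0, by rintro x ⟨S, -, -, rfl⟩; positivity⟩
  refine (csInf_le hbdd ⟨S, hS, hSV, rfl⟩).trans ?_
  rcases k.eq_zero_or_pos with rfl | hk
  · simp
  have hsplit : (eB G S Sᶜ : ℝ) = k * #S - eB G S S := by
    have := eB_add_eB_compl (G := G) S S
    rw [eB_univ hreg] at this
    rw [eq_sub_iff_add_eq, add_comm]
    exact_mod_cast this
  have hS0 : (0 : ℝ) < #S := by exact_mod_cast hS.card_pos
  rw [hsplit, div_le_div_iff₀ (by positivity) (by positivity)]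
  nlinarith

lemma two_mul_length_le_eB_support {u v : V} (p : G.Walk u v) (hp : p.IsPath) :
    2 * p.length ≤ eB G p.support.toFinset p.support.toFinset := by
  induction p with
  | nil => simp
  | @cons u w v huw q ih =>
    rw [SimpleGraph.Walk.cons_isPath_iff] at hp
    have hw : w ∈ {t ∈ q.support.toFinset | G.Adj u t} := by simp [huw]
    rw [SimpleGraph.Walk.support_cons, List.toFinset_cons,
      eB_insert_self (by simpa using hp.2), SimpleGraph.Walk.length_cons]
    have := card_pos.2 ⟨w, hw⟩
    have := ih hp.1
    omega

lemma cheeger_le_of_isPath (hreg : G.IsRegularOfDegree k) {u v : V} (p : G.Walk u v)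
    (hp : p.IsPath) (hV : 2 * (p.length + 1) ≤ Fintype.card V) {θ : ℝ}
    (hθ : θ * (p.length + 1) ≤ 2 * p.length) : cheeger G k ≤ ((k : ℝ) - θ) / k := by
  have hcard : #p.support.toFinset = p.length + 1 := by
    rw [List.toFinset_card_of_nodup hp.support_nodup, SimpleGraph.Walk.length_support]
  refine cheeger_le_of_mul_card_le_eB hreg ⟨u, List.mem_toFinset.2 p.start_mem_support⟩
    (by rwa [hcard]) ?_
  rw [hcard]
  push_cast
  exact hθ.trans (by exact_mod_cast two_mul_length_le_eB_support p hp)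

end Cheeger

lemma Finset.exists_subset_card_eq_mul_sum_le {α : Type*} [DecidableEq α] (g : α → ℕ) {m : ℕ}
    (B : Finset α) (hm : m ≤ #B) :
    ∃ L ⊆ B, #L = m ∧ m * ∑ x ∈ B, g x ≤ #B * ∑ x ∈ L, g x := by
  induction B using Finset.strongInduction with
  | H B ih =>
  rcases hm.eq_or_lt with rfl | hlt
  · exact ⟨B, subset_rfl, rfl, le_rfl⟩
  obtain ⟨a, ha, hmin⟩ := B.exists_min_image g (card_pos.1 (by omega))
  obtain ⟨L, hLB, hL, hsum⟩ :=
    ih (B.erase a) (erase_ssubset ha) (by rw [card_erase_of_mem ha]; omega)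
  refine ⟨L, hLB.trans (erase_subset a B), hL, ?_⟩
  -- removing a minimum of `g` cannot lower the average
  have hmin_le : m * g a ≤ ∑ x ∈ L, g x := by
    simpa [hL] using card_nsmul_le_sum L g (g a) fun x hx => hmin x (erase_subset a B (hLB hx))
  rw [← add_sum_erase B g ha, ← card_erase_add_one ha]
  nlinarith

section Bipartition

variable {V : Type} [Fintype V] [DecidableEq V] {G : SimpleGraph V} [DecidableRel G.Adj] {k : ℕ}
  {X : Finset V}

lemma card_compl_eq_of_bipartition (hreg : G.IsRegularOfDegree k) (hk : 0 < k)
    (hX : ∀ x y, G.Adj x y → (x ∈ X ↔ y ∉ X)) : #Xᶜ = #X := by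
  have hXX : eB G X X = 0 := eB_eq_zero fun s hs t ht hst => (hX s t hst).1 hs ht
  have hXcXc : eB G Xᶜ Xᶜ = 0 :=
    eB_eq_zero fun s hs t ht hst => mem_compl.1 hs ((hX s t hst).2 (mem_compl.1 ht))
  have h1 := eB_add_eB_compl (G := G) X X
  have h2 := eB_add_eB_compl (G := G) Xᶜ Xᶜ
  rw [compl_compl, eB_univ hreg, eB_comm Xᶜ X] at h2
  rw [eB_univ hreg] at h1
  exact Nat.eq_of_mul_eq_mul_left hk (by omega)

lemma exists_card_eq_two_mul_le_eB (hreg : G.IsRegularOfDegree k)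
    (hX : ∀ x y, G.Adj x y → (x ∈ X ↔ y ∉ X)) (hXc : #Xᶜ = #X) {m : ℕ} (hm : m ≤ #X) :
    ∃ S : Finset V, #S = 2 * m ∧ 2 * (k * m * m) ≤ #X * eB G S S := by
  obtain ⟨P, hPX, hP⟩ := exists_subset_card_eq hm
  have eB_P : ∀ T, eB G P T = ∑ t ∈ T, #{s ∈ P | G.Adj s t} := fun T => by
    rw [eB_eq_sum_sum, sum_comm]
    simp only [card_filter]
  have hPXc : eB G P Xᶜ = k * m := by
    have := eB_add_eB_compl (G := G) P X
    rw [eB_eq_zero fun s hs t ht hst => (hX s t hst).1 (hPX hs) ht, eB_univ hreg, hP] at this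
    omega
  obtain ⟨L, hLXc, hL, hsum⟩ :=
    Xᶜ.exists_subset_card_eq_mul_sum_le (fun t => #{s ∈ P | G.Adj s t}) (m := m) (by omega)
  rw [← eB_P, ← eB_P, hPXc, hXc] at hsum
  have hPL : Disjoint P L := disjoint_of_subset_left hPX (disjoint_of_subset_right hLXc
    disjoint_compl_right)
  refine ⟨P ∪ L, by rw [card_union_of_disjoint hPL, hP, hL]; ring, ?_⟩
  have := eB_add_eB_le_eB_union (G := G) hPL
  rw [eB_comm L P] at this
  nlinarith

lemma cheeger_le_of_bipartition (hreg : G.IsRegularOfDegree k) (hk : 0 < k)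
    (hX : ∀ x y, G.Adj x y → (x ∈ X ↔ y ∉ X)) {m : ℕ} (hm0 : 0 < m) (hm : 2 * m ≤ #X)
    {θ : ℝ} (hθ : θ * #X ≤ k * m) : cheeger G k ≤ ((k : ℝ) - θ) / k := by
  have hXc := card_compl_eq_of_bipartition hreg hk hX
  obtain ⟨S, hS, hSe⟩ := exists_card_eq_two_mul_le_eB hreg hX hXc (m := m) (by omega)
  have hV : Fintype.card V = 2 * #X := by rw [← card_add_card_compl X, hXc]; ring
  refine cheeger_le_of_mul_card_le_eB (S := S) hreg (card_pos.1 (by omega)) (by omega) ?_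
  have hX0 : (0 : ℝ) < #X := by exact_mod_cast (by omega : 0 < #X)
  have hSe' : 2 * (k * m * m : ℝ) ≤ #X * eB G S S := by exact_mod_cast hSe
  refine le_of_mul_le_mul_left ?_ hX0
  calc (#X : ℝ) * (θ * #S) = 2 * m * (θ * #X) := by rw [hS]; push_cast; ring
    _ ≤ 2 * m * (k * m) := mul_le_mul_of_nonneg_left hθ (by positivity)
    _ ≤ #X * eB G S S := by linarith

end Bipartition

section DistanceRegular

variable {V : Type} {G : SimpleGraph V} {A : Set V}

lemma even_dist_iff (hconn : G.Connected) (hA : ∀ x y, G.Adj x y → (x ∈ A ↔ y ∉ A)) (u v : V) :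
    Even (G.dist u v) ↔ (u ∈ A ↔ v ∈ A) := by
  obtain ⟨p, hp⟩ := hconn.exists_walk_length_eq_dist u v
  rw [← hp]
  clear hp
  induction p with
  | nil => simp
  | cons h p ih =>
    rw [SimpleGraph.Walk.length_cons, Nat.even_add_one, ih]
    have := hA _ _ h
    tauto

lemma dist_eq_or_of_adj (hconn : G.Connected) (hA : ∀ x y, G.Adj x y → (x ∈ A ↔ y ∉ A))
    {x y : V} (h : G.Adj x y) (z : V) :
    G.dist z y + 1 = G.dist z x ∨ G.dist z y = G.dist z x + 1 := by
  have h1 := hconn.dist_triangle (u := z) (v := x) (w := y)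
  have h2 := hconn.dist_triangle (u := z) (v := y) (w := x)
  rw [SimpleGraph.dist_eq_one_iff_adj.2 h] at h1
  rw [SimpleGraph.dist_eq_one_iff_adj.2 h.symm] at h2
  have hpar : Even (G.dist z x) ↔ ¬Even (G.dist z y) := by
    rw [even_dist_iff hconn hA, even_dist_iff hconn hA]
    have := hA x y h
    tauto
  rw [Nat.even_iff, Nat.even_iff] at hpar
  omega

variable (G) in
noncomputable def distMatrix (i : ℕ) : Matrix V V ℝ := of fun x y => if G.dist x y = i then 1 else 0

lemma distMatrix_zero [DecidableEq V] (hconn : G.Connected) : distMatrix G 0 = 1 := by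
  ext x y
  simp [distMatrix, one_apply, hconn.dist_eq_zero_iff]

lemma distMatrix_one [DecidableRel G.Adj] : distMatrix G 1 = G.adjMatrix ℝ := by
  ext x y
  simp [distMatrix, SimpleGraph.dist_eq_one_iff_adj]

lemma sum_distMatrix [Fintype V] {D : ℕ} (hdiam : ∀ x y, G.dist x y ≤ D) :
    ∑ i ∈ range (D + 1), distMatrix G i = of fun _ _ => 1 := by
  ext x y
  simp [distMatrix, Matrix.sum_apply, Nat.lt_succ_of_le (hdiam x y)]

variable [Fintype V] [DecidableRel G.Adj] {D : ℕ} {b c : ℕ → ℕ}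

lemma IsDistRegular.card_filter (hdrg : IsDistRegular G D b c) {i : ℕ} (hi : i ≤ D) {x y : V}
    (h : G.dist x y = i) :
    #{z | G.Adj y z ∧ G.dist x z = i - 1} = c i ∧ #{z | G.Adj y z ∧ G.dist x z = i + 1} = b i := by
  simpa [Nat.card_eq_fintype_card, Fintype.card_subtype] using hdrg i hi x y h

lemma IsDistRegular.isRegularOfDegree (hdrg : IsDistRegular G D b c) :
    G.IsRegularOfDegree (b 0) := fun x => by
  rw [← (hdrg.card_filter D.zero_le (SimpleGraph.dist_self (v := x))).2,
    ← SimpleGraph.card_neighborFinset_eq_degree, SimpleGraph.neighborFinset_eq_filter]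
  congr 1
  ext z
  simp [SimpleGraph.dist_eq_one_iff_adj]

lemma IsDistRegular.c_add_b [DecidableEq V] (hconn : G.Connected)
    (hA : ∀ x y, G.Adj x y → (x ∈ A ↔ y ∉ A)) (hdrg : IsDistRegular G D b c) {i : ℕ}
    (hi0 : 0 < i) (hiD : i ≤ D) {x y : V} (h : G.dist x y = i) : c i + b i = b 0 := by
  obtain ⟨hc, hb⟩ := hdrg.card_filter hiD h
  rw [← hc, ← hb, ← hdrg.isRegularOfDegree y, ← SimpleGraph.card_neighborFinset_eq_degree,
    SimpleGraph.neighborFinset_eq_filter, ← card_union_of_disjoint, ← filter_or]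
  · congr 1
    ext z
    simp only [mem_filter, mem_univ, true_and, ← and_or_left, and_iff_left_iff_imp]
    intro hyz
    have := dist_eq_or_of_adj hconn hA hyz x
    omega
  · rw [disjoint_filter]
    intros
    omega

lemma IsDistRegular.adjMatrix_mul_distMatrix (hconn : G.Connected)
    (hA : ∀ x y, G.Adj x y → (x ∈ A ↔ y ∉ A)) (hdrg : IsDistRegular G D b c)
    (hdiam : ∀ x y, G.dist x y ≤ D) {i : ℕ} (hi : 0 < i) :
    G.adjMatrix ℝ * distMatrix G i =
      (c (i + 1) : ℝ) • distMatrix G (i + 1) + (b (i - 1) : ℝ) • distMatrix G (i - 1) := by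
  ext x z
  obtain ⟨hc, hb⟩ := hdrg.card_filter (hdiam z x) rfl
  have hcount : #{y | G.Adj x y ∧ G.dist z y = i} =
      (if G.dist z x = i + 1 then c (i + 1) else 0) +
        (if G.dist z x = i - 1 then b (i - 1) else 0) := by
    split_ifs with h1 h2 h2
    · omega
    · rw [← h1, ← hc, h1, Nat.add_sub_cancel, add_zero]
    · rw [← h2, ← hb, h2, Nat.sub_add_cancel hi, zero_add]
    · rw [card_eq_zero, filter_eq_empty_iff]
      rintro y - ⟨hxy, rfl⟩
      have := dist_eq_or_of_adj hconn hA hxy z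
      omega
  have hcomm : ∀ y, G.dist y z = G.dist z y := fun y => SimpleGraph.dist_comm
  simp only [distMatrix, SimpleGraph.adjMatrix_mul_apply, of_apply, sum_boole,
    SimpleGraph.neighborFinset_eq_filter, filter_filter, hcomm, hcount, Matrix.add_apply,
    Matrix.smul_apply, smul_eq_mul, mul_ite, mul_one, mul_zero]
  push_cast
  rfl

lemma IsDistRegular.adjMatrix_mul_self (hconn : G.Connected)
    (hA : ∀ x y, G.Adj x y → (x ∈ A ↔ y ∉ A)) (hdrg : IsDistRegular G D b c)
    (hdiam : ∀ x y, G.dist x y ≤ D) [DecidableEq V] :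
    G.adjMatrix ℝ * G.adjMatrix ℝ = (c 2 : ℝ) • distMatrix G 2 + (b 0 : ℝ) • 1 := by
  simpa [distMatrix_one, distMatrix_zero hconn] using
    hdrg.adjMatrix_mul_distMatrix hconn hA hdiam one_pos

lemma IsDistRegular.card_dist_eq_two_mul (hconn : G.Connected)
    (hA : ∀ x y, G.Adj x y → (x ∈ A ↔ y ∉ A)) (hdrg : IsDistRegular G D b c)
    (hdiam : ∀ x y, G.dist x y ≤ D) [DecidableEq V] (x : V) :
    #{z | G.dist x z = 2} * c 2 + b 0 = b 0 * b 0 := by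
  have hreg := hdrg.isRegularOfDegree
  -- row sums of `A² = c₂ A₂ + k I`
  have h := congrFun (congrArg (· *ᵥ (1 : V → ℝ)) (hdrg.adjMatrix_mul_self hconn hA hdiam)) x
  have hA1 : G.adjMatrix ℝ *ᵥ (1 : V → ℝ) = (b 0 : ℝ) • 1 := by
    ext y
    simp [hreg y]
  have hD1 : (distMatrix G 2 *ᵥ (1 : V → ℝ)) x = #{z | G.dist x z = 2} := by
    simp [distMatrix, mulVec, dotProduct]
  rw [← mulVec_mulVec, hA1, mulVec_smul, hA1, add_mulVec, smul_mulVec, smul_mulVec,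
    one_mulVec] at h
  simp only [Pi.add_apply, Pi.smul_apply, hD1, Pi.one_apply, smul_eq_mul, mul_one] at h
  exact_mod_cast (by linarith : (#{z | G.dist x z = 2} : ℝ) * c 2 + b 0 = b 0 * b 0)

lemma sum_eq_zero_of_adjMatrix_mulVec_eq_smul {k : ℕ} (hreg : G.IsRegularOfDegree k) {θ : ℝ}
    {f : V → ℝ} (hf : G.adjMatrix ℝ *ᵥ f = θ • f) (hθ : θ ≠ k) : ∑ x, f x = 0 := by
  have h : θ * ∑ x, f x = k * ∑ x, f x :=
    calc θ * ∑ x, f x = 1 ⬝ᵥ (G.adjMatrix ℝ *ᵥ f) := by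
          rw [hf, dotProduct_smul, one_dotProduct, smul_eq_mul]
      _ = (G.adjMatrix ℝ *ᵥ 1) ⬝ᵥ f := by
          rw [dotProduct_mulVec, ← mulVec_transpose, SimpleGraph.transpose_adjMatrix]
      _ = k * ∑ x, f x := by simp [dotProduct, hreg _, mul_sum]
  exact (mul_eq_zero.1 (by linear_combination h : (θ - k) * ∑ x, f x = 0)).resolve_left
    (sub_ne_zero.2 hθ)

lemma IsDistRegular.eigenvalue_cubic_eq_zero [DecidableEq V] (hconn : G.Connected)
    (hA : ∀ x y, G.Adj x y → (x ∈ A ↔ y ∉ A)) (hdrg : IsDistRegular G 3 b c)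
    (hdiam : ∀ x y, G.dist x y ≤ 3) {u v : V} (huv : G.dist u v = 3) {θ : ℝ}
    (hθ : IsAdjEigenvalue G θ) (hθk : θ ≠ b 0) :
    (θ + b 0) * (θ ^ 2 - (b 0 - c 2)) = 0 := by
  obtain ⟨f, hf0, hf⟩ := hθ
  obtain ⟨p, -, hp⟩ := hconn.exists_path_of_dist u v
  have hadj : G.Adj u (p.getVert 1) := by simpa using p.adj_getVert_succ (i := 0) (by omega)
  have hc1 : c 1 = 1 := by
    rw [← (hdrg.card_filter (by norm_num) (SimpleGraph.dist_eq_one_iff_adj.2 hadj)).1,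
      card_eq_one]
    refine ⟨u, ?_⟩
    ext z
    simp only [mem_filter, mem_univ, true_and, hconn.dist_eq_zero_iff, mem_singleton]
    exact ⟨fun h => h.2.symm, by rintro rfl; exact ⟨hadj.symm, rfl⟩⟩
  have hb3 : b 3 = 0 := by
    rw [← (hdrg.card_filter le_rfl huv).2, card_eq_zero, filter_eq_empty_iff]
    intro z _ hz
    linarith [hdiam u z, hz.2]
  have hb1 := hdrg.c_add_b hconn hA one_pos (by norm_num) (SimpleGraph.dist_eq_one_iff_adj.2 hadj)
  have hc3 := hdrg.c_add_b hconn hA (by norm_num) le_rfl huv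
  have hAA := hdrg.adjMatrix_mul_self hconn hA hdiam
  have hAD : G.adjMatrix ℝ * distMatrix G 2 =
      (b 0 : ℝ) • distMatrix G 3 + ((b 0 : ℝ) - 1) • G.adjMatrix ℝ := by
    rw [hdrg.adjMatrix_mul_distMatrix hconn hA hdiam two_pos]
    simp only [Nat.reduceAdd, Nat.reduceSub, distMatrix_one, show c 3 = b 0 by omega,
      show (b 1 : ℝ) = b 0 - 1 by rw [eq_sub_iff_add_eq]; norm_cast; omega]
  have hJ : f + θ • f + distMatrix G 2 *ᵥ f + distMatrix G 3 *ᵥ f = 0 := by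
    have := congrArg (· *ᵥ f) (sum_distMatrix hdiam)
    simp only [sum_range_succ, sum_range_zero, zero_add, add_mulVec, distMatrix_zero hconn,
      one_mulVec, distMatrix_one, hf] at this
    rw [this]
    ext x
    simp [mulVec, dotProduct, sum_eq_zero_of_adjMatrix_mulVec_eq_smul hdrg.isRegularOfDegree hf hθk]
  have e1 : θ ^ 2 • f = (c 2 : ℝ) • (distMatrix G 2 *ᵥ f) + (b 0 : ℝ) • f := by
    rw [pow_two, mul_smul, ← hf, ← mulVec_smul, ← hf, mulVec_mulVec, hAA, add_mulVec, smul_mulVec,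
      smul_mulVec, one_mulVec]
  have e3 : θ ^ 3 • f = (c 2 : ℝ) • ((b 0 : ℝ) • (distMatrix G 3 *ᵥ f) + ((b 0 : ℝ) - 1) • θ • f)
      + (b 0 : ℝ) • θ • f := by
    have := congrArg (G.adjMatrix ℝ *ᵥ ·) e1
    simp only [mulVec_smul, mulVec_add, hf, mulVec_mulVec, hAD, add_mulVec, smul_mulVec] at this
    rw [← this, pow_succ, mul_smul]
  have : ((θ + b 0) * (θ ^ 2 - (b 0 - c 2))) • f = 0 := by
    linear_combination (norm := module) e3 + (b 0 : ℝ) • e1 + ((c 2 : ℝ) * b 0) • hJ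
  exact (smul_eq_zero.1 this).resolve_right hf0

end DistanceRegular

lemma card_filter_even_dist {V : Type} [Fintype V] [DecidableEq V] {G : SimpleGraph V}
    (hconn : G.Connected) {x : V} (hdiam : ∀ y, G.dist x y ≤ 3) :
    #{z | Even (G.dist x z)} = 1 + #{z | G.dist x z = 2} := by
  suffices h : univ.filter (fun z => Even (G.dist x z)) =
      insert x (univ.filter fun z => G.dist x z = 2) by
    rw [h, card_insert_of_notMem (by simp), add_comm]
  ext z
  simp only [mem_filter, mem_univ, true_and, mem_insert, eq_comm (a := z), ←
    hconn.dist_eq_zero_iff, Nat.even_iff]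
  have := hdiam z
  omega

lemma mul_one_add_le_mul_half {k c n : ℕ} {θ : ℝ} (hn : n * c + k = k * k)
    (hθ2 : θ ^ 2 = k - c) (hθ : 3 / 2 < θ) : θ * (1 + n : ℕ) ≤ k * ((1 + n) / 2 : ℕ) := by
  have hck : c + 3 ≤ k := by
    have : (c : ℝ) + 2 < k := by nlinarith
    have : c + 2 < k := by exact_mod_cast this
    omega
  have hc : 1 ≤ c := Nat.pos_of_ne_zero fun hc => by subst hc; nlinarith
  have hm : (n : ℝ) ≤ 2 * ((1 + n) / 2 : ℕ) := by exact_mod_cast (by omega : n ≤ 2 * ((1 + n) / 2))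
  have hK : (4 : ℝ) ≤ k := by exact_mod_cast (by omega : 4 ≤ k)
  have hnR : (n : ℝ) * c + k = k * k := by exact_mod_cast hn
  have hn0 : (0 : ℝ) ≤ n := n.cast_nonneg
  -- given `n c = k (k - 1)`:
  -- `(k n)² - 4 (k - c) (1 + n)² = n² k (k - 4) + 4 n k (k - 3) + 8 k² - 12 k + 4 c`
  have hsq : 4 * (k - c) * (1 + n) ^ 2 ≤ ((k : ℝ) * n) ^ 2 := by
    nlinarith [mul_nonneg (mul_nonneg (sq_nonneg (n : ℝ)) (by linarith : (0 : ℝ) ≤ k))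
      (by linarith : (0 : ℝ) ≤ k - 4), mul_nonneg (mul_nonneg hn0 (by linarith : (0 : ℝ) ≤ k))
      (by linarith : (0 : ℝ) ≤ k - 3)]
  have h2 : 2 * θ * (1 + n) ≤ k * n := by
    nlinarith [mul_nonneg (by linarith : (0 : ℝ) ≤ k) hn0]
  push_cast
  nlinarith

/-- A finite bipartite distance-regular graph of diameter 3 with valency `k` and
second-largest adjacency eigenvalue `θ1` satisfies `h_G ≤ (k - θ1)/k`. -/
theorem stmt_12 {V : Type} [Fintype V] [DecidableEq V] (G : SimpleGraph V) [DecidableRel G.Adj]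
    (b c : ℕ → ℕ) (k : ℕ) (hconn : G.Connected)
    (hdrg : IsDistRegular G 3 b c) (hk : b 0 = k)
    (hdiam : (∀ x y : V, G.dist x y ≤ 3) ∧ ∃ x y : V, G.dist x y = 3)
    (hbip : ∃ A : Set V, ∀ x y : V, G.Adj x y → (x ∈ A ↔ y ∉ A))
    (θ1 : ℝ) (hθ1 : IsSecondLargestAdjEigenvalue G k θ1) :
    cheeger G k ≤ ((k : ℝ) - θ1) / (k : ℝ) := by
  obtain ⟨A, hA⟩ := hbip
  obtain ⟨hdiam, x₀, y₀, hxy⟩ := hdiam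
  obtain ⟨hθ, hθk, -⟩ := hθ1
  subst hk
  have hreg := hdrg.isRegularOfDegree
  obtain ⟨p, hp, hplen⟩ := hconn.exists_path_of_dist x₀ y₀
  rw [hxy] at hplen
  rcases le_or_gt θ1 1 with h1 | h1
  · refine cheeger_le_of_isPath hreg (p.take 1) (hp.take 1) ?_ ?_ <;>
      rw [SimpleGraph.Walk.take_length, hplen]
    · have := hp.length_lt
      omega
    · norm_num
      linarith
  have hsq : θ1 ^ 2 = b 0 - c 2 := by
    rcases mul_eq_zero.1 (hdrg.eigenvalue_cubic_eq_zero hconn hA hdiam hxy hθ hθk) with h | h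
    · linarith [(b 0).cast_nonneg (α := ℝ)]
    · linarith
  have hn := hdrg.card_dist_eq_two_mul hconn hA hdiam x₀
  have hck : c 2 + 2 ≤ b 0 := by exact_mod_cast (by nlinarith : (c 2 : ℝ) + 1 < b 0)
  have hn3 : 3 ≤ #{z | G.dist x₀ z = 2} := by nlinarith
  set X : Finset V := {z | Even (G.dist x₀ z)}
  have hX : ∀ y z, G.Adj y z → (y ∈ X ↔ z ∉ X) := fun y z hyz => by
    simp only [X, mem_filter, mem_univ, true_and, even_dist_iff hconn hA]
    have := hA y z hyz
    tauto
  have hXn : #X = 1 + #{z | G.dist x₀ z = 2} := card_filter_even_dist hconn (hdiam x₀)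
  rcases le_or_gt θ1 (3 / 2) with h2 | h2
  · refine cheeger_le_of_isPath hreg p hp ?_ (by rw [hplen]; push_cast; linarith)
    rw [← card_add_card_compl X, card_compl_eq_of_bipartition hreg (by omega) hX, hplen]
    omega
  · exact cheeger_le_of_bipartition hreg (by omega) hX (m := #X / 2) (by omega)
      (Nat.mul_div_le _ _) (by rw [hXn]; exact mul_one_add_le_mul_half hn hsq h2)
end

section
/- Let d ≥ 1 and q ≥ 2 be integers and let G be the Hamming graph H(d,q), whose vertex set is the set of functions from Fin d to Fin q, two vertices being adjacent exactly when they differ in precisely one coordinate (Hamming distance 1). Then G is d(q−1)-regular and h_G ≤ q/(d(q−1)). (Here q/(d(q−1)) equals λ1 = (k − θ1)/k, since the second-largest adjacency eigenvalue of H(d,q) is θ1 = q(d−1) − d.) -/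
open Finset Matrix

/-- The Hamming graph `H(d, q)`: vertices are functions `Fin d → Fin q`, adjacent when
they differ in exactly one coordinate (Hamming distance 1). -/
def hammingGraph (d q : ℕ) : SimpleGraph (Fin d → Fin q) where
  Adj x y := hammingDist x y = 1
  symm := by
    constructor
    intro x y h
    rwa [hammingDist_comm]
  loopless := by
    constructor
    intro x h
    simp [hammingDist_self] at h

instance {d q : ℕ} : DecidableRel (hammingGraph d q).Adj := fun x y =>
  inferInstanceAs (Decidable (hammingDist x y = 1))

/-! The coordinate slice `S = {x | x i = a}` holds a `1/q` fraction of the vertices, and an edge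
leaving `S` from `x` can only change coordinate `i`, so `E[S,Sᶜ] ≤ (q - 1)|S|`. Hence
`h_G ≤ (q - 1)/(d(q - 1)) = 1/d ≤ q/(d(q - 1))`. -/

section Hamming

variable {ι : Type*} {β : ι → Type*} [Fintype ι] [DecidableEq ι] [∀ i, DecidableEq (β i)]

theorem hammingDist_update_self {x : ∀ i, β i} {i : ι} {a : β i} (ha : a ≠ x i) :
    hammingDist x (Function.update x i a) = 1 := by
  rw [hammingDist, card_eq_one]
  refine ⟨i, ext fun j => ?_⟩
  rcases eq_or_ne j i with rfl | hj
  · simpa using ha.symm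
  · simp [hj]

theorem eq_update_of_hammingDist_eq_one {x y : ∀ i, β i} (h : hammingDist x y = 1) {i : ι}
    (hi : x i ≠ y i) : y = Function.update x i (y i) := by
  obtain ⟨k, hk⟩ := card_eq_one.mp h
  have hik : i = k := mem_singleton.mp (hk ▸ mem_filter.mpr ⟨mem_univ i, hi⟩)
  subst hik
  funext j
  rcases eq_or_ne j i with rfl | hj
  · simp
  · have hj' : j ∉ ({j | x j ≠ y j} : Finset ι) := hk ▸ notMem_singleton.mpr hj
    simp only [mem_filter, mem_univ, true_and, not_not] at hj'
    simp [hj, hj']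

theorem hammingDist_eq_one_iff {x y : ∀ i, β i} :
    hammingDist x y = 1 ↔ ∃ i, ∃ a ≠ x i, y = Function.update x i a := by
  refine ⟨fun h => ?_, fun ⟨i, a, ha, hy⟩ => hy ▸ hammingDist_update_self ha⟩
  obtain ⟨i, hi⟩ := card_eq_one.mp h
  have hi' : x i ≠ y i := by
    have hmem : i ∈ ({j | x j ≠ y j} : Finset ι) := hi ▸ mem_singleton_self i
    simpa using hmem
  exact ⟨i, y i, hi'.symm, eq_update_of_hammingDist_eq_one h hi'⟩

theorem card_hammingDist_eq_one [∀ i, Fintype (β i)] (x : ∀ i, β i) :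
    #{y | hammingDist x y = 1} = ∑ i, (Fintype.card (β i) - 1) := by
  have hbij : #(univ.sigma fun i => univ.erase (x i)) = #{y | hammingDist x y = 1} := by
    refine card_nbij (fun p => Function.update x p.1 p.2) ?_ ?_ ?_
    · rintro ⟨i, a⟩ hp
      simpa using hammingDist_update_self (by simpa using hp)
    · rintro ⟨i, a⟩ hp ⟨j, b⟩ hq h
      simp only [coe_sigma, Set.mem_sigma_iff, coe_erase, Set.mem_sdiff, Set.mem_singleton_iff,
        coe_univ, Set.mem_univ, true_and] at hp hq h
      rcases eq_or_ne i j with rfl | hij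
      · simpa using congrFun h i
      · have := congrFun h i
        rw [Function.update_self, Function.update_of_ne hij] at this
        exact absurd this hp
    · intro y hy
      obtain ⟨i, a, ha, rfl⟩ := hammingDist_eq_one_iff.mp (mem_filter.mp hy).2
      exact ⟨⟨i, a⟩, by simpa using ha, rfl⟩
  rw [← hbij, card_sigma]
  simp [card_erase_of_mem]

end Hamming

section Slice

variable {ι α : Type*} [Fintype ι] [DecidableEq ι] [Fintype α] [DecidableEq α]

theorem card_filter_apply_eq (i : ι) (a : α) :
    #{x : ι → α | x i = a} = Fintype.card α ^ (Fintype.card ι - 1) := by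
  simpa using Fintype.card_filter_piFinset_const_eq_of_mem (univ : Finset α) i (mem_univ a)

theorem two_mul_card_filter_apply_eq_le (hα : 2 ≤ Fintype.card α) (i : ι) (a : α) :
    2 * #{x : ι → α | x i = a} ≤ Fintype.card (ι → α) := by
  have hι : Fintype.card ι = Fintype.card ι - 1 + 1 :=
    (Nat.succ_pred_eq_of_pos (Fintype.card_pos_iff.mpr ⟨i⟩)).symm
  rw [card_filter_apply_eq, Fintype.card_fun, hι, pow_succ', Nat.add_sub_cancel]
  exact Nat.mul_le_mul_right _ hα

end Slice

theorem hammingGraph_isRegularOfDegree (d q : ℕ) :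
    (hammingGraph d q).IsRegularOfDegree (d * (q - 1)) := by
  intro x
  rw [SimpleGraph.degree, SimpleGraph.neighborFinset_eq_filter]
  exact (card_hammingDist_eq_one x).trans (by simp)

theorem eB_hammingGraph_slice_le {d q : ℕ} (i : Fin d) (a : Fin q) :
    eB (hammingGraph d q) {x | x i = a} ({x | x i = a} : Finset (Fin d → Fin q))ᶜ ≤
      #{x : Fin d → Fin q | x i = a} * (q - 1) := by
  set S : Finset (Fin d → Fin q) := {x | x i = a}
  calc eB (hammingGraph d q) S Sᶜ ≤ #(S ×ˢ univ.erase a) := by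
        refine card_le_card_of_injOn (fun p => (p.1, p.2 i)) ?_ ?_
        · rintro ⟨x, y⟩ hp
          simp_all [S]
        · rintro ⟨x, y⟩ hp ⟨x', y'⟩ hp' h
          simp only [coe_filter, mem_product, mem_compl, Set.mem_ofPred_eq, S, mem_filter,
            mem_univ, true_and, Prod.mk.injEq] at hp hp' h
          obtain ⟨rfl, hy⟩ := h
          have e := eq_update_of_hammingDist_eq_one hp.2 (hp.1.1 ▸ Ne.symm hp.1.2)
          have e' := eq_update_of_hammingDist_eq_one hp'.2 (hp'.1.1 ▸ Ne.symm hp'.1.2)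
          rw [e, e', hy]
    _ = #S * (q - 1) := by simp [card_erase_of_mem]

theorem cheeger_le {V : Type} [Fintype V] [DecidableEq V] (G : SimpleGraph V)
    [DecidableRel G.Adj] (k : ℕ) {S : Finset V} (hS : S.Nonempty)
    (hS₂ : 2 * #S ≤ Fintype.card V) : cheeger G k ≤ (eB G S Sᶜ : ℝ) / (k * #S) :=
  csInf_le ⟨0, by rintro _ ⟨T, -, -, rfl⟩; positivity⟩ ⟨S, hS, hS₂, rfl⟩

/-- For `d ≥ 1` and `q ≥ 2`, the Hamming graph `H(d, q)` is `d(q-1)`-regular and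
satisfies `h_G ≤ q/(d(q-1))`. -/
theorem stmt_19 (d q : ℕ) (hd : 1 ≤ d) (hq : 2 ≤ q) :
    (hammingGraph d q).IsRegularOfDegree (d * (q - 1)) ∧
      cheeger (hammingGraph d q) (d * (q - 1)) ≤ (q : ℝ) / ((d : ℝ) * ((q : ℝ) - 1)) := by
  refine ⟨hammingGraph_isRegularOfDegree d q, ?_⟩
  set i : Fin d := ⟨0, hd⟩
  set a : Fin q := ⟨0, by omega⟩
  set S : Finset (Fin d → Fin q) := {x | x i = a}
  have hS : S.Nonempty := ⟨fun _ => a, by simp [S]⟩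
  have hS₂ : 2 * #S ≤ Fintype.card (Fin d → Fin q) :=
    two_mul_card_filter_apply_eq_le (by simpa using hq) i a
  have hq' : ((q - 1 : ℕ) : ℝ) = q - 1 := by rw [Nat.cast_sub (by omega), Nat.cast_one]
  have hqr : (1 : ℝ) < q := by exact_mod_cast hq
  have hdr : (0 : ℝ) < d := by exact_mod_cast hd
  have hSr : (0 : ℝ) < #S := by exact_mod_cast hS.card_pos
  calc cheeger (hammingGraph d q) (d * (q - 1))
      ≤ (eB (hammingGraph d q) S Sᶜ : ℝ) / ((d * (q - 1) : ℕ) * #S) := cheeger_le _ _ hS hS₂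
    _ ≤ ((#S * (q - 1) : ℕ) : ℝ) / ((d * (q - 1) : ℕ) * #S) := by
        gcongr; exact_mod_cast eB_hammingGraph_slice_le i a
    _ = 1 / d := by
        push_cast [hq']
        field_simp [(by linarith : (q : ℝ) - 1 ≠ 0)]
    _ ≤ (q : ℝ) / ((d : ℝ) * ((q : ℝ) - 1)) := by
        rw [div_le_div_iff₀ hdr (by nlinarith)]
        nlinarith
end
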